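/- arXiv:2210.01802 — 2 statements merged into one kernel-verified Lean document; each statement's English description precedes it below -/
import Mathlib

section
/- Under the assumptions of the previous statement, let F(x) = G₁(x) + G₂(x)·J(x), where G₁ is L₁-Lipschitz, G₂ is μ₁-bounded and L₁-Lipschitz (i.e. ‖G₂(x)‖ ≤ μ₁ and ‖G₂(x) − G₂(y)‖ ≤ L₁‖x − y‖), and ‖J(x)‖ ≤ μ₃/μ₂ for all x. Then ‖F(x) − F(y)‖ ≤ (L₁ + (μ₃L₁ + μ₁L₃)/μ₂ + μ₁μ₃L₂/μ₂²) ‖x − y‖. -/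
open scoped Matrix.Norms.L2Operator
set_option maxHeartbeats 1000000

theorem altdiff_loss_gradient_lipschitz {n m p : ℕ}
    (H : EuclideanSpace ℝ (Fin n) → Matrix (Fin m) (Fin m) ℝ)
    (M : EuclideanSpace ℝ (Fin n) → Matrix (Fin m) (Fin p) ℝ)
    (G₁ : EuclideanSpace ℝ (Fin n) → Matrix (Fin 1) (Fin p) ℝ)
    (G₂ : EuclideanSpace ℝ (Fin n) → Matrix (Fin 1) (Fin m) ℝ)
    (μ₁ μ₂ μ₃ L₁ L₂ L₃ : ℝ) (hμ₂ : 0 < μ₂)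
    (hunit : ∀ x, IsUnit (H x))
    (hinv : ∀ x, ‖(H x)⁻¹‖ ≤ 1 / μ₂)
    (hM : ∀ x, ‖M x‖ ≤ μ₃)
    (hHlip : ∀ x y, ‖H x - H y‖ ≤ L₂ * ‖x - y‖)
    (hMlip : ∀ x y, ‖M x - M y‖ ≤ L₃ * ‖x - y‖)
    (hG₁lip : ∀ x y, ‖G₁ x - G₁ y‖ ≤ L₁ * ‖x - y‖)
    (hG₂ : ∀ x, ‖G₂ x‖ ≤ μ₁)
    (hG₂lip : ∀ x y, ‖G₂ x - G₂ y‖ ≤ L₁ * ‖x - y‖)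
    (hJbound : ∀ x, ‖-(H x)⁻¹ * M x‖ ≤ μ₃ / μ₂) :
    ∀ x y,
      ‖(G₁ x + G₂ x * (-(H x)⁻¹ * M x)) - (G₁ y + G₂ y * (-(H y)⁻¹ * M y))‖ ≤
        (L₁ + (μ₃ * L₁ + μ₁ * L₃) / μ₂ + μ₁ * μ₃ * L₂ / μ₂ ^ 2) * ‖x - y‖ := by
  intro x y
  have hdet : ∀ z, IsUnit (H z).det := fun z => (Matrix.isUnit_iff_isUnit_det _).mp (hunit z)
  set d := ‖x - y‖ with hdd
  have hd : 0 ≤ d := norm_nonneg _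
  have hμ₁ : 0 ≤ μ₁ := le_trans (norm_nonneg _) (hG₂ x)
  have hμ₃ : 0 ≤ μ₃ := le_trans (norm_nonneg _) (hM x)
  have hL1d : 0 ≤ L₁ * d := le_trans (norm_nonneg _) (hG₁lip x y)
  have hL2d : 0 ≤ L₂ * d := le_trans (norm_nonneg _) (hHlip x y)
  have hL3d : 0 ≤ L₃ * d := le_trans (norm_nonneg _) (hMlip x y)
  have hinvx : 0 ≤ (1:ℝ) / μ₂ := by positivity
  have hJb : 0 ≤ μ₃ / μ₂ := le_trans (norm_nonneg _) (hJbound x)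
  -- inverse difference identity
  have h1 : (H x)⁻¹ * (H y - H x) * (H y)⁻¹ = (H x)⁻¹ - (H y)⁻¹ := by
    rw [Matrix.mul_sub, Matrix.sub_mul, Matrix.mul_assoc,
      Matrix.mul_nonsing_inv _ (hdet y), Matrix.nonsing_inv_mul _ (hdet x),
      Matrix.mul_one, Matrix.one_mul]
  have key : (-(H x)⁻¹ * M x) - (-(H y)⁻¹ * M y)
      = -((H x)⁻¹ * (M x - M y)) - ((H x)⁻¹ * (H y - H x) * (H y)⁻¹) * M y := by
    rw [h1]
    simp only [Matrix.mul_sub, Matrix.sub_mul, Matrix.neg_mul, Matrix.mul_neg]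
    abel
  -- Lipschitz bound on J
  have hA : ‖(H x)⁻¹ * (H y - H x) * (H y)⁻¹‖ ≤ (1 / μ₂) * (L₂ * d) * (1 / μ₂) := by
    refine le_trans (Matrix.l2_opNorm_mul _ _)
      (mul_le_mul ?_ (hinv y) (norm_nonneg _) (by positivity))
    refine le_trans (Matrix.l2_opNorm_mul _ _) ?_
    have h2 := hHlip y x
    rw [norm_sub_rev y x] at h2
    exact mul_le_mul (hinv x) h2 (norm_nonneg _) hinvx
  have hJlip : ‖(-(H x)⁻¹ * M x) - (-(H y)⁻¹ * M y)‖
      ≤ (1 / μ₂) * (L₃ * d) + ((1 / μ₂) * (L₂ * d) * (1 / μ₂)) * μ₃ := by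
    rw [key]
    refine le_trans (norm_sub_le _ _) (add_le_add ?_ ?_)
    · rw [norm_neg]
      exact le_trans (Matrix.l2_opNorm_mul _ _)
        (mul_le_mul (hinv x) (hMlip x y) (norm_nonneg _) hinvx)
    · exact le_trans (Matrix.l2_opNorm_mul _ _)
        (mul_le_mul hA (hM y) (norm_nonneg _) (by positivity))
  -- decompose F x - F y
  have hdecomp : (G₁ x + G₂ x * (-(H x)⁻¹ * M x)) - (G₁ y + G₂ y * (-(H y)⁻¹ * M y))
      = (G₁ x - G₁ y) + ((G₂ x - G₂ y) * (-(H x)⁻¹ * M x)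
        + G₂ y * ((-(H x)⁻¹ * M x) - (-(H y)⁻¹ * M y))) := by
    simp only [Matrix.mul_sub, Matrix.sub_mul, Matrix.neg_mul, Matrix.mul_neg]
    abel
  have hsum : ‖(G₁ x + G₂ x * (-(H x)⁻¹ * M x)) - (G₁ y + G₂ y * (-(H y)⁻¹ * M y))‖
      ≤ L₁ * d + ((L₁ * d) * (μ₃ / μ₂)
        + μ₁ * ((1 / μ₂) * (L₃ * d) + ((1 / μ₂) * (L₂ * d) * (1 / μ₂)) * μ₃)) := by
    rw [hdecomp]
    refine le_trans (norm_add_le _ _) (add_le_add (hG₁lip x y) ?_)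
    refine le_trans (norm_add_le _ _) (add_le_add ?_ ?_)
    · exact le_trans (Matrix.l2_opNorm_mul _ _)
        (mul_le_mul (hG₂lip x y) (hJbound x) (norm_nonneg _) hL1d)
    · exact le_trans (Matrix.l2_opNorm_mul _ _)
        (mul_le_mul (hG₂ y) hJlip (norm_nonneg _) hμ₁)
  have heq : (L₁ + (μ₃ * L₁ + μ₁ * L₃) / μ₂ + μ₁ * μ₃ * L₂ / μ₂ ^ 2) * d
      = L₁ * d + ((L₁ * d) * (μ₃ / μ₂)
        + μ₁ * ((1 / μ₂) * (L₃ * d) + ((1 / μ₂) * (L₂ * d) * (1 / μ₂)) * μ₃)) := by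
    field_simp; ring
  rw [heq]; exact hsum
end

section
/- Let a, ρ > 0 and define T : ℝ → ℝ (acting on the dual variable) by the one-dimensional ADMM-type update for min_x (a/2)x² s.t. x ≤ 0: given ν, set x⁺ = argmin_x (a/2)x² + ν(x + s) + (ρ/2)(x + s)², s⁺ = max(0, −ν/ρ − x⁺), ν⁺ = ν + ρ(x⁺ + s⁺). Then for any initial (s₀, ν₀) with ν₀ ≥ 0, the iterates satisfy x_k → 0, which is the optimal solution. -/
theorem scalar_admm_converges (a ρ : ℝ) (ha : 0 < a) (hρ : 0 < ρ)
    (x s ν : ℕ → ℝ) (hν0 : 0 ≤ ν 0)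
    (hx : ∀ k, x (k + 1) = -(ν k + ρ * s k) / (a + ρ))
    (hs : ∀ k, s (k + 1) = max 0 (-(ν k) / ρ - x (k + 1)))
    (hν : ∀ k, ν (k + 1) = ν k + ρ * (x (k + 1) + s (k + 1))) :
    Filter.Tendsto x Filter.atTop (nhds 0) := by
  have haρ : 0 < a + ρ := by linarith
  set c : ℝ := max a ρ / (a + ρ) with hc
  have hc0 : 0 ≤ c := by positivity
  have hc1 : c < 1 := by
    rw [div_lt_one haρ]
    rcases max_cases a ρ with ⟨h, _⟩ | ⟨h, _⟩ <;> rw [h] <;> linarith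
  have hca : a ≤ c * (a + ρ) := by
    rw [hc, div_mul_cancel₀ _ (ne_of_gt haρ)]; exact le_max_left a ρ
  have hcρ : ρ ≤ c * (a + ρ) := by
    rw [hc, div_mul_cancel₀ _ (ne_of_gt haρ)]; exact le_max_right a ρ
  -- ν is nonnegative
  have hνnn : ∀ k, 0 ≤ ν k := by
    intro k
    induction k with
    | zero => exact hν0
    | succ k ih =>
      rw [hν k, hs k]
      rcases le_or_gt (-(ν k) / ρ - x (k + 1)) 0 with h | h
      · rw [max_eq_left h]
        have : -(ν k) / ρ ≤ x (k + 1) := by linarith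
        rw [div_le_iff₀ hρ] at this
        nlinarith
      · rw [max_eq_right h.le]
        have : ν k + ρ * (x (k + 1) + (-(ν k) / ρ - x (k + 1))) = 0 := by
          field_simp; ring
        linarith [this]
  have hsnn : ∀ k, 0 ≤ s (k + 1) := fun k => by rw [hs k]; exact le_max_left _ _
  -- the shifted Lyapunov sequence
  set u : ℕ → ℝ := fun k => ν (k + 1) + ρ * s (k + 1) with hu
  have hunn : ∀ k, 0 ≤ u k := fun k => by
    have := hνnn (k + 1); have := hsnn k; positivity
  have hdecay : ∀ k, u (k + 1) ≤ c * u k := by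
    intro k
    have hv := hνnn (k + 1)
    have hw := hsnn k
    have hxk : x (k + 2) = -(ν (k + 1) + ρ * s (k + 1)) / (a + ρ) := hx (k + 1)
    have hνk : ν (k + 2) = ν (k + 1) + ρ * (x (k + 2) + s (k + 2)) := hν (k + 1)
    have hsk : s (k + 2) = max 0 (-(ν (k + 1)) / ρ - x (k + 2)) := hs (k + 1)
    have husimp : u (k + 1) = ν (k + 2) + ρ * s (k + 2) := rfl
    have hunfold : u k = ν (k + 1) + ρ * s (k + 1) := rfl
    have hx2 : ρ * ((a + ρ) * x (k + 2)) = -(ρ * (ν (k + 1) + ρ * s (k + 1))) := by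
      rw [hxk]; field_simp
    rcases le_or_gt (-(ν (k + 1)) / ρ - x (k + 2)) 0 with h | h
    · -- s (k+2) = 0
      have hs2 : s (k + 2) = 0 := by rw [hsk, max_eq_left h]
      rw [husimp, hs2, hνk, hs2, hunfold]
      nlinarith [hx2, mul_nonneg (sub_nonneg.mpr hca) (add_nonneg hv (mul_nonneg hρ.le hw)),
        mul_nonneg (mul_nonneg ha.le hρ.le) hw, mul_nonneg (mul_nonneg hρ.le hρ.le) hw]
    · -- s (k+2) = -(ν (k+1))/ρ - x (k+2), ν (k+2) = 0
      have hs2 : s (k + 2) = -(ν (k + 1)) / ρ - x (k + 2) := by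
        rw [hsk, max_eq_right h.le]
      have hν2 : ν (k + 2) = 0 := by
        rw [hνk, hs2]; field_simp; ring
      have hρs : ρ * s (k + 2) = -(ν (k + 1)) - ρ * x (k + 2) := by
        rw [hs2]; field_simp
      rw [husimp, hν2, hρs, hunfold]
      nlinarith [hx2, mul_nonneg (sub_nonneg.mpr hcρ) (add_nonneg hv (mul_nonneg hρ.le hw)),
        mul_nonneg ha.le hv, mul_nonneg hρ.le hv]
  -- u k ≤ c^k * u 0
  have hgeo : ∀ k, u k ≤ c ^ k * u 0 := by
    intro k
    induction k with
    | zero => simp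
    | succ k ih =>
      calc u (k + 1) ≤ c * u k := hdecay k
        _ ≤ c * (c ^ k * u 0) := by nlinarith [hunn k]
        _ = c ^ (k + 1) * u 0 := by ring
  have hu0 : Filter.Tendsto u Filter.atTop (nhds 0) := by
    have hpow : Filter.Tendsto (fun k => c ^ k * u 0) Filter.atTop (nhds 0) := by
      have := (tendsto_pow_atTop_nhds_zero_of_lt_one hc0 hc1).mul_const (u 0)
      simpa using this
    exact tendsto_of_tendsto_of_tendsto_of_le_of_le tendsto_const_nhds hpow hunn hgeo
  -- x (k + 2) = - u k / (a + ρ)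
  have hxu : ∀ k, x (k + 2) = -u k / (a + ρ) := fun k => hx (k + 1)
  have hx2 : Filter.Tendsto (fun k => x (k + 2)) Filter.atTop (nhds 0) := by
    have : Filter.Tendsto (fun k => -u k / (a + ρ)) Filter.atTop (nhds 0) := by
      have := (hu0.neg).div_const (a + ρ)
      simpa using this
    exact this.congr (fun k => (hxu k).symm)
  exact (Filter.tendsto_add_atTop_iff_nat 2).mp hx2
end
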